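/- For strings s, t, u with s ⪯ t ⪯ u in lexicographic order, lcp(s,u) = min(lcp(s,t), lcp(t,u)). -/
import Mathlib


/-- Length of the longest common prefix of two strings. -/
def lcpLen {α : Type*} [DecidableEq α] : List α → List α → ℕ
  | a :: s, b :: t => if a = b then lcpLen s t + 1 else 0
  | _, _ => 0

lemma lcpLen_le_left {α : Type*} [DecidableEq α] : ∀ (s u : List α),
    lcpLen s u ≤ s.length
  | [], _ => by simp [lcpLen]
  | _ :: _, [] => by simp [lcpLen]
  | a :: s, b :: u => by
    by_cases h : a = b <;> simp [lcpLen, h, Nat.succ_le_succ (lcpLen_le_left s u)]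

lemma lcpLen_le_right {α : Type*} [DecidableEq α] : ∀ (s u : List α),
    lcpLen s u ≤ u.length
  | [], _ => by simp [lcpLen]
  | _ :: _, [] => by simp [lcpLen]
  | a :: s, b :: u => by
    by_cases h : a = b <;> simp [lcpLen, h, Nat.succ_le_succ (lcpLen_le_right s u)]

lemma lcpLen_self {α : Type*} [DecidableEq α] : ∀ (s : List α),
    lcpLen s s = s.length
  | [] => by simp [lcpLen]
  | a :: s => by simp [lcpLen, lcpLen_self s]

lemma lcp_strict {α : Type*} [LinearOrder α] : ∀ (s t u : List α),
    List.Lex (· < ·) s t → List.Lex (· < ·) t u →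
    lcpLen s u = min (lcpLen s t) (lcpLen t u)
  | [], t, u, _, _ => by simp [lcpLen]
  | a :: s, t, u, hst, htu => by
    cases hst with
    | cons h =>
      rename_i t'
      cases htu with
      | cons h2 =>
        rename_i u'
        simp [lcpLen, lcp_strict s t' u' h h2, Nat.succ_min_succ]
      | rel h2 =>
        rename_i c u'
        have : a ≠ c := ne_of_lt h2
        simp [lcpLen, this]
    | rel h =>
      rename_i b t'
      cases htu with
      | cons h2 =>
        have : a ≠ b := ne_of_lt h
        simp [lcpLen, this]
      | rel h2 =>
        have : a ≠ _ := ne_of_lt (lt_trans h h2)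
        simp [lcpLen, ne_of_lt h, this]

/-- For `s ⪯ t ⪯ u` in lexicographic order,
`lcp(s,u) = min (lcp(s,t)) (lcp(t,u))`. -/
theorem lcp_outer_eq_min {α : Type*} [LinearOrder α] (s t u : List α)
    (hst : List.Lex (· < ·) s t ∨ s = t)
    (htu : List.Lex (· < ·) t u ∨ t = u) :
    lcpLen s u = min (lcpLen s t) (lcpLen t u) := by
  rcases hst with hst | rfl
  · rcases htu with htu | rfl
    · exact lcp_strict _ _ _ hst htu
    · rw [lcpLen_self]
      exact (min_eq_left (lcpLen_le_right _ _)).symm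
  · rw [lcpLen_self]
    exact (min_eq_right (lcpLen_le_left _ _)).symm
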